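/- arXiv:2112.10690 — 2 statements merged into one kernel-verified Lean document; each statement's English description precedes it below -/
import Mathlib

section
/- Let 0 < ρ < 1 and γ, ε, β, B ≥ 0. Suppose nonnegative reals (d_t)_{t≥0} satisfy d_0 = 0 and d_t ≤ γε · Σ_{k=0}^{t-1} ρ^{t-1-k} (d_k + β B ρ^k) for all t ≥ 1. Then d_t ≤ β B (ρ + γε)^t for all t ≥ 0. -/
/-!
Comparing with the solution of the recursion taken with equality: by strong induction,
`d t + c ρ^t ≤ c (ρ + g)^t`, because feeding this bound into the recursion leaves the sum
`g ∑ ρ^(t-1-k) (ρ + g)^k`, which telescopes to `(ρ + g)^t - ρ^t`.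
-/

open Finset

theorem add_mul_pow_le_mul_add_pow_of_le_sum {R : Type*} [CommSemiring R] [PartialOrder R]
    [IsOrderedRing R] {ρ g c : R} (hρ : 0 ≤ ρ) (hg : 0 ≤ g) (d : ℕ → R) (h0 : d 0 ≤ 0)
    (hrec : ∀ t, 1 ≤ t → d t ≤ g * ∑ k ∈ range t, ρ ^ (t - 1 - k) * (d k + c * ρ ^ k)) :
    ∀ t, d t + c * ρ ^ t ≤ c * (ρ + g) ^ t := by
  intro t
  induction t using Nat.strong_induction_on with
  | _ t ih =>
    rcases Nat.eq_zero_or_pos t with rfl | ht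
    · simpa using add_le_add_left h0 c
    have hsum : g * ∑ k ∈ range t, ρ ^ (t - 1 - k) * (d k + c * ρ ^ k)
        ≤ g * ∑ k ∈ range t, ρ ^ (t - 1 - k) * (c * (ρ + g) ^ k) := by
      gcongr with k hk
      exact ih k (mem_range.mp hk)
    calc d t + c * ρ ^ t
        ≤ g * ∑ k ∈ range t, ρ ^ (t - 1 - k) * (c * (ρ + g) ^ k) + c * ρ ^ t := by
          gcongr
          exact (hrec t ht).trans hsum
      _ = c * ((∑ k ∈ range t, (g + ρ) ^ k * ρ ^ (t - 1 - k)) * g + ρ ^ t) := by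
          rw [mul_sum, sum_mul, mul_add, mul_sum]
          congr 1
          refine sum_congr rfl fun k _ => ?_
          rw [add_comm ρ g]
          ring
      _ = c * (ρ + g) ^ t := by rw [geom_sum₂_mul_add, add_comm g ρ]

theorem stmt_2_general (ρ γ ε β B : ℝ) (hρ0 : 0 < ρ)
    (hγ : 0 ≤ γ) (hε : 0 ≤ ε) (hβ : 0 ≤ β) (hB : 0 ≤ B)
    (d : ℕ → ℝ) (h0 : d 0 = 0)
    (hrec : ∀ t : ℕ, 1 ≤ t →
      d t ≤ γ * ε * ∑ k ∈ Finset.range t, ρ ^ (t - 1 - k) * (d k + β * B * ρ ^ k)) :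
    ∀ t : ℕ, d t ≤ β * B * (ρ + γ * ε) ^ t := by
  intro t
  have hbound := add_mul_pow_le_mul_add_pow_of_le_sum hρ0.le (mul_nonneg hγ hε) d h0.le hrec t
  have : 0 ≤ β * B * ρ ^ t := by positivity
  linarith

theorem stmt_2 (ρ γ ε β B : ℝ) (hρ0 : 0 < ρ) (hρ1 : ρ < 1)
    (hγ : 0 ≤ γ) (hε : 0 ≤ ε) (hβ : 0 ≤ β) (hB : 0 ≤ B)
    (d : ℕ → ℝ) (hnn : ∀ t, 0 ≤ d t) (h0 : d 0 = 0)
    (hrec : ∀ t : ℕ, 1 ≤ t →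
      d t ≤ γ * ε * ∑ k ∈ Finset.range t, ρ ^ (t - 1 - k) * (d k + β * B * ρ ^ k)) :
    ∀ t : ℕ, d t ≤ β * B * (ρ + γ * ε) ^ t :=
  stmt_2_general ρ γ ε β B hρ0 hγ hε hβ hB d h0 hrec
end

section
/- Let 0 < ρ < 1, γ, ε_x, ε_u ≥ 0 with ρ + γε_x < 1, and β, B ≥ 0. Suppose nonnegative reals (d_t)_{t≥0} are bounded with M = sup_t d_t and satisfy, for all t, d_t ≤ γε_x · (M/(1−ρ)) + γε_x β B t ρ^{t−1} + γε_u/(1−ρ). Then M ≤ ((1−ρ)/(1−(ρ+γε_x))) · γ · (β B ε_x /(e ρ log(ρ^{-1})) + ε_u/(1−ρ)). -/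
theorem stmt_7 (ρ γ εx εu β B M : ℝ) (hρ0 : 0 < ρ) (hρ1 : ρ < 1)
    (hγ : 0 ≤ γ) (hεx : 0 ≤ εx) (hεu : 0 ≤ εu) (hs : ρ + γ * εx < 1)
    (hβ : 0 ≤ β) (hB : 0 ≤ B)
    (d : ℕ → ℝ) (hnn : ∀ t, 0 ≤ d t) (hM : IsLUB (Set.range d) M)
    (h : ∀ t : ℕ,
      d t ≤ γ * εx * (M / (1 - ρ)) + γ * εx * β * B * t * ρ ^ (t - 1)
        + γ * εu / (1 - ρ)) :
    M ≤ ((1 - ρ) / (1 - (ρ + γ * εx))) * γ *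
      (β * B * εx / (Real.exp 1 * ρ * Real.log ρ⁻¹) + εu / (1 - ρ)) := by
  set L := Real.log ρ⁻¹ with hLdef
  have hL : 0 < L := Real.log_pos ((one_lt_inv₀ hρ0).2 hρ1)
  have hD : 0 < 1 - ρ := by linarith
  have hS : 0 < 1 - (ρ + γ * εx) := by linarith
  have he1 : (0:ℝ) < Real.exp 1 := Real.exp_pos 1
  have hE : 0 < Real.exp 1 * ρ * L := by positivity
  have hlogρ : Real.log ρ = -L := by
    rw [hLdef, Real.log_inv]; ring
  have key : ∀ n : ℕ, (n : ℝ) * ρ ^ (n - 1) ≤ 1 / (Real.exp 1 * ρ * L) := by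
    intro n
    cases n with
    | zero => simp; positivity
    | succ m =>
      simp only [Nat.succ_sub_one]
      set E := Real.exp (((m:ℝ) + 1) * L) with hEdef
      have hEpos : 0 < E := Real.exp_pos _
      have h1 : ρ ^ (m+1) = Real.exp (((m+1 : ℕ) : ℝ) * Real.log ρ) := by
        rw [Real.exp_nat_mul, Real.exp_log hρ0]
      have hz : ((m+1 : ℕ) : ℝ) * (-L) + ((m:ℝ)+1) * L = 0 := by push_cast; ring
      have hpow : ρ ^ (m + 1) * E = 1 := by
        rw [h1, hlogρ, hEdef, ← Real.exp_add, hz, Real.exp_zero]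
      have h2 : ((m:ℝ)+1) * L * Real.exp 1 ≤ E := by
        have ha := Real.add_one_le_exp (((m:ℝ)+1) * L - 1)
        have hb : Real.exp (((m:ℝ)+1) * L - 1) = E / Real.exp 1 := by
          rw [Real.exp_sub]
        rw [hb] at ha
        rw [← le_div_iff₀ he1]
        linarith
      rw [le_div_iff₀ hE]
      have h3 : ((m:ℝ)+1) * L * Real.exp 1 * (ρ ^ m * ρ) ≤ E * (ρ ^ m * ρ) :=
        mul_le_mul_of_nonneg_right h2 (by positivity)
      have h4 : ρ ^ m * ρ = ρ ^ (m+1) := by ring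
      push_cast
      nlinarith [hpow, h3, h4]
  have hC : M ≤ γ * εx * (M / (1 - ρ)) + γ * εx * β * B * (1 / (Real.exp 1 * ρ * L))
      + γ * εu / (1 - ρ) := by
    apply hM.2
    rintro y ⟨t, rfl⟩
    have := h t
    have hk : γ * εx * β * B * t * ρ ^ (t - 1) ≤
        γ * εx * β * B * (1 / (Real.exp 1 * ρ * L)) := by
      have := mul_le_mul_of_nonneg_left (key t) (by positivity : 0 ≤ γ * εx * β * B)
      linarith [this]
    linarith
  have final : M * (1 - (ρ + γ * εx)) * (Real.exp 1 * ρ * L) ≤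
      (1 - ρ) * (γ * εx * β * B) + γ * εu * (Real.exp 1 * ρ * L) := by
    have h5 := mul_le_mul_of_nonneg_right hC
      (by positivity : (0:ℝ) ≤ (1 - ρ) * (Real.exp 1 * ρ * L))
    have eL : (γ * εx * (M / (1 - ρ)) + γ * εx * β * B * (1 / (Real.exp 1 * ρ * L))
        + γ * εu / (1 - ρ)) * ((1 - ρ) * (Real.exp 1 * ρ * L)) =
        γ * εx * M * (Real.exp 1 * ρ * L) + γ * εx * β * B * (1 - ρ)
          + γ * εu * (Real.exp 1 * ρ * L) := by
      field_simp
    rw [eL] at h5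
    nlinarith [h5]
  have heq : ((1 - ρ) / (1 - (ρ + γ * εx))) * γ *
      (β * B * εx / (Real.exp 1 * ρ * L) + εu / (1 - ρ)) =
      ((1 - ρ) * (γ * εx * β * B) + γ * εu * (Real.exp 1 * ρ * L)) /
        ((1 - (ρ + γ * εx)) * (Real.exp 1 * ρ * L)) := by
    field_simp
  rw [heq, le_div_iff₀ (by positivity)]
  nlinarith [final]
end
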